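/- arXiv:2106.10324 — 6 statements merged into one kernel-verified Lean document; each statement's English description precedes it below -/
import Mathlib

section
/- (Danskin's theorem.) Let Δ ⊆ ℝ^k be a nonempty compact set and let f : ℝ^n × ℝ^k → ℝ be continuous and continuously differentiable in its first argument w. Suppose that for every w ∈ ℝ^n the function δ ↦ f(w, δ) has a unique maximizer δ*(w) over Δ. Then the value function F(w) := max_{δ ∈ Δ} f(w, δ) is differentiable on ℝ^n and its gradient satisfies ∇F(w) = ∇_w f(w, δ*(w)) for every w. -/
/-!
The maximizer `δ*` is continuous: on the compact set `Δ \ U` the maximum of `f w` stays strictly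
below the value `F w`, and both maxima depend continuously on `w`. Since `F x = f x (δ* x)`, the
increment `F x - F w` is squeezed between `f x (δ* w) - f w (δ* w)` and
`f x (δ* x) - f w (δ* x)`. By the mean value inequality and the joint continuity of the gradient,
both are `⟪∇_w f(w, δ* w), x - w⟫ + o(‖x - w‖)` uniformly in the second argument near `δ* w`, and
`δ* x` lies there for `x` close to `w`.
-/

open Filter Topology Metric Set InnerProductSpace

theorem isMaxOn_of_forall_ne_lt {α β : Type*} [Preorder α] {f : β → α} {K : Set β} {a : β}
    (h : ∀ b ∈ K, b ≠ a → f b < f a) : IsMaxOn f K a :=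
  isMaxOn_iff.2 fun b hb => by
    rcases eq_or_ne b a with rfl | hne
    exacts [le_rfl, (h b hb hne).le]

theorem IsMaxOn.csSup_image_eq {α β : Type*} [ConditionallyCompleteLattice α] {f : β → α}
    {K : Set β} {a : β} (ha : a ∈ K) (h : IsMaxOn f K a) : sSup (f '' K) = f a :=
  IsGreatest.csSup_eq ⟨mem_image_of_mem f ha, forall_mem_image.2 fun _ hx => h hx⟩

theorem IsCompact.continuous_unique_argmax {X Y : Type*} [TopologicalSpace X]
    [TopologicalSpace Y] {f : X → Y → ℝ} {K : Set Y} {σ : X → Y} (hK : IsCompact K)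
    (hf : Continuous ↿f) (hσK : ∀ x, σ x ∈ K)
    (hσ : ∀ x, ∀ δ ∈ K, δ ≠ σ x → f x δ < f x (σ x)) : Continuous σ := by
  have hmaxOn : ∀ x, IsMaxOn (f x) K (σ x) := fun x => isMaxOn_of_forall_ne_lt (hσ x)
  refine continuous_iff_continuousAt.2 fun w => tendsto_nhds.2 fun U hU hwU => ?_
  rcases (K \ U).eq_empty_or_nonempty with hL | hL
  · exact univ_mem' fun x => sdiff_eq_empty.1 hL (hσK x)
  have hfw : Continuous (f w) := hf.comp (Continuous.prodMk_right w)
  obtain ⟨δ₀, hδ₀, hδ₀max⟩ := (hK.diff hU).exists_sSup_image_eq hL hfw.continuousOn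
  have hgap : sSup (f w '' (K \ U)) < sSup (f w '' K) := by
    rw [hδ₀max, (hmaxOn w).csSup_image_eq (hσK w)]
    exact hσ w δ₀ hδ₀.1 fun h => hδ₀.2 (h ▸ hwU)
  filter_upwards [((hK.diff hU).continuous_sSup hf).continuousAt.eventually_lt
    (hK.continuous_sSup hf).continuousAt hgap] with x hx
  by_contra hxU
  rw [(hmaxOn x).csSup_image_eq (hσK x)] at hx
  have hfx : Continuous (f x) := hf.comp (Continuous.prodMk_right x)
  exact hx.not_ge (le_csSup ((hK.diff hU).image hfx).bddAbove
    (mem_image_of_mem _ ⟨hσK x, hxU⟩))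

theorem eventually_norm_sub_sub_le_of_continuousAt_fderiv {E Y F : Type*}
    [NormedAddCommGroup E] [NormedSpace ℝ E] [NormedAddCommGroup F] [NormedSpace ℝ F]
    [TopologicalSpace Y] {f : E → Y → F} {f' : E → Y → E →L[ℝ] F} {w : E} {δ₀ : Y}
    (hf : ∀ x δ, HasFDerivAt (f · δ) (f' x δ) x) (hf' : ContinuousAt ↿f' (w, δ₀))
    {ε : ℝ} (hε : 0 < ε) :
    ∃ V ∈ 𝓝 δ₀, ∀ᶠ x in 𝓝 w, ∀ δ ∈ V, ‖f x δ - f w δ - f' w δ₀ (x - w)‖ ≤ ε * ‖x - w‖ := by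
  obtain ⟨u, hu, V, hV, huV⟩ := mem_nhds_prod_iff.1 (hf' (closedBall_mem_nhds (f' w δ₀) hε))
  obtain ⟨r, hr, hru⟩ := Metric.mem_nhds_iff.1 hu
  refine ⟨V, hV, eventually_of_mem (ball_mem_nhds w hr) fun x hx δ hδ => ?_⟩
  have hbound : ∀ y ∈ ball w r, ‖f' y δ - f' w δ₀‖ ≤ ε := fun y hy => by
    have hyδ := huV (show (y, δ) ∈ u ×ˢ V from ⟨hru hy, hδ⟩)
    rwa [mem_preimage, mem_closedBall_iff_norm] at hyδ
  exact (convex_ball w r).norm_image_sub_le_of_norm_hasFDerivWithin_le'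
    (fun y _ => (hf y δ).hasFDerivWithinAt) hbound (mem_ball_self hr) hx

theorem hasFDerivAt_apply_argmax {E Y : Type*} [NormedAddCommGroup E] [NormedSpace ℝ E]
    [TopologicalSpace Y] {f : E → Y → ℝ} {f' : E → Y → E →L[ℝ] ℝ} {σ : E → Y} {w : E}
    (hf : ∀ x δ, HasFDerivAt (f · δ) (f' x δ) x) (hf' : ContinuousAt ↿f' (w, σ w))
    (hσ : ContinuousAt σ w) (hmax : ∀ x y, f x (σ y) ≤ f x (σ x)) :
    HasFDerivAt (fun x => f x (σ x)) (f' w (σ w)) w := by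
  refine .of_isLittleO <| Asymptotics.isLittleO_iff.2 fun ε hε => ?_
  obtain ⟨V, hV, hfV⟩ := eventually_norm_sub_sub_le_of_continuousAt_fderiv hf hf' hε
  filter_upwards [hfV, hσ hV] with x hx hσx
  have upper := hx (σ x) hσx
  have lower := hx (σ w) (mem_of_mem_nhds hV)
  rw [Real.norm_eq_abs, abs_le] at upper lower ⊢
  constructor <;> linarith [hmax x w, hmax w x]

theorem stmt2_general (n k : ℕ)
    (Δ : Set (EuclideanSpace ℝ (Fin k))) (hΔ_cpt : IsCompact Δ)
    (f : EuclideanSpace ℝ (Fin n) → EuclideanSpace ℝ (Fin k) → ℝ)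
    (hf_cont : Continuous fun p : EuclideanSpace ℝ (Fin n) × EuclideanSpace ℝ (Fin k) =>
      f p.1 p.2)
    (G : EuclideanSpace ℝ (Fin n) → EuclideanSpace ℝ (Fin k) → EuclideanSpace ℝ (Fin n))
    (hG : ∀ w δ, HasGradientAt (fun w' => f w' δ) (G w δ) w)
    (hG_cont : Continuous fun p : EuclideanSpace ℝ (Fin n) × EuclideanSpace ℝ (Fin k) =>
      G p.1 p.2)
    (δstar : EuclideanSpace ℝ (Fin n) → EuclideanSpace ℝ (Fin k))
    (hδstar_mem : ∀ w, δstar w ∈ Δ)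
    (hδstar_max : ∀ w, ∀ δ ∈ Δ, δ ≠ δstar w → f w δ < f w (δstar w))
    (F : EuclideanSpace ℝ (Fin n) → ℝ)
    (hF : ∀ w, F w = sSup ((fun δ => f w δ) '' Δ)) :
    ∀ w, HasGradientAt F (G w (δstar w)) w := by
  have hmaxOn : ∀ w, IsMaxOn (f w) Δ (δstar w) := fun w =>
    isMaxOn_of_forall_ne_lt (hδstar_max w)
  have hFeq : F = fun w => f w (δstar w) :=
    funext fun w => (hF w).trans ((hmaxOn w).csSup_image_eq (hδstar_mem w))
  have hδstar_cont : Continuous δstar :=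
    hΔ_cpt.continuous_unique_argmax hf_cont hδstar_mem hδstar_max
  intro w
  rw [hFeq, hasGradientAt_iff_hasFDerivAt]
  exact hasFDerivAt_apply_argmax (fun x δ => (hG x δ).hasFDerivAt)
    ((toDual ℝ _).continuous.comp hG_cont).continuousAt hδstar_cont.continuousAt
    fun x y => hmaxOn x (hδstar_mem y)

/-- **Danskin's theorem.** Let `Δ ⊆ ℝ^k` be a nonempty compact set and let
`f : ℝ^n × ℝ^k → ℝ` be continuous and continuously differentiable in its first argument `w`
(with gradient `G w δ` with respect to `w`, depending continuously on `(w, δ)`). If for every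
`w` the function `δ ↦ f w δ` has a unique maximizer `δ*(w)` over `Δ`, then the value function
`F(w) := max_{δ ∈ Δ} f w δ` is differentiable with `∇F(w) = ∇_w f(w, δ*(w))`. -/
theorem stmt2 (n k : ℕ)
    (Δ : Set (EuclideanSpace ℝ (Fin k))) (hΔ_ne : Δ.Nonempty) (hΔ_cpt : IsCompact Δ)
    (f : EuclideanSpace ℝ (Fin n) → EuclideanSpace ℝ (Fin k) → ℝ)
    (hf_cont : Continuous fun p : EuclideanSpace ℝ (Fin n) × EuclideanSpace ℝ (Fin k) =>
      f p.1 p.2)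
    (G : EuclideanSpace ℝ (Fin n) → EuclideanSpace ℝ (Fin k) → EuclideanSpace ℝ (Fin n))
    (hG : ∀ w δ, HasGradientAt (fun w' => f w' δ) (G w δ) w)
    (hG_cont : Continuous fun p : EuclideanSpace ℝ (Fin n) × EuclideanSpace ℝ (Fin k) =>
      G p.1 p.2)
    (δstar : EuclideanSpace ℝ (Fin n) → EuclideanSpace ℝ (Fin k))
    (hδstar_mem : ∀ w, δstar w ∈ Δ)
    (hδstar_max : ∀ w, ∀ δ ∈ Δ, δ ≠ δstar w → f w δ < f w (δstar w))
    (F : EuclideanSpace ℝ (Fin n) → ℝ)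
    (hF : ∀ w, F w = sSup ((fun δ => f w δ) '' Δ)) :
    ∀ w, HasGradientAt F (G w (δstar w)) w :=
  stmt2_general n k Δ hΔ_cpt f hf_cont G hG hG_cont δstar hδstar_mem hδstar_max F hF
end

section
/- Let f : ℝ^n × ℝ^k → ℝ be differentiable with β-Lipschitz gradient on ℝ^n × ℝ^k (β > 0), and suppose that for every w ∈ ℝ^n the map δ ↦ f(w, δ) is μ-strongly concave (μ > 0). Let g : ℝ^k → ℝ be concave, and suppose that for every w the function δ ↦ f(w, δ) + g(δ) attains its maximum at a (necessarily unique) point δ*(w) ∈ ℝ^k. Then the map w ↦ δ*(w) is (β/μ)-Lipschitz: ‖δ*(w₁) − δ*(w₂)‖ ≤ (β/μ)‖w₁ − w₂‖ for all w₁, w₂ ∈ ℝ^n. -/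
/-!
At its maximiser, the `μ`-strongly concave function `δ ↦ f (w, δ) + g δ` falls off at least
quadratically: `f (w, δ) + g δ + μ/2 ‖δ - δ*(w)‖² ≤ f (w, δ*(w)) + g (δ*(w))`. Adding this
inequality at `(w₁, δ*(w₂))` and at `(w₂, δ*(w₁))` cancels `g` and bounds `μ ‖δ*(w₁) - δ*(w₂)‖²`
by the mixed second difference of `f` over the rectangle spanned by `w₁ - w₂` and
`δ*(w₁) - δ*(w₂)`. The mean value inequality applied to `p ↦ f (p + v) - f p`, whose gradient
`G (p + v) - G p` has norm at most `β ‖v‖`, bounds that difference by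
`β ‖δ*(w₁) - δ*(w₂)‖ ‖w₁ - w₂‖`.
-/

open Set Filter Topology InnerProductSpace

theorem StrongConcaveOn.add_mul_norm_sq_le_of_isMaxOn {E : Type*} [NormedAddCommGroup E]
    [NormedSpace ℝ E] {s : Set E} {m : ℝ} {f : E → ℝ} {x b : E}
    (hf : StrongConcaveOn s m f) (hb : IsMaxOn f s b) (hbs : b ∈ s) (hxs : x ∈ s) :
    f x + m / 2 * ‖x - b‖ ^ 2 ≤ f b := by
  have hchord : ∀ t ∈ Ioo (0 : ℝ) 1, f x + (1 - t) * (m / 2 * ‖x - b‖ ^ 2) ≤ f b := by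
    rintro t ⟨ht₀, ht₁⟩
    have hseg := hf.2 hxs hbs ht₀.le (sub_nonneg.2 ht₁.le) (add_sub_cancel t 1)
    have hmax : f (t • x + (1 - t) • b) ≤ f b :=
      hb (hf.1 hxs hbs ht₀.le (sub_nonneg.2 ht₁.le) (add_sub_cancel t 1))
    simp only [smul_eq_mul] at hseg
    have : t * (f x + (1 - t) * (m / 2 * ‖x - b‖ ^ 2) - f b) ≤ 0 := by linarith
    exact sub_nonpos.1 (nonpos_of_mul_nonpos_right this ht₀)
  have hlim : Tendsto (fun t : ℝ => f x + (1 - t) * (m / 2 * ‖x - b‖ ^ 2)) (𝓝[>] 0)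
      (𝓝 (f x + (1 - 0) * (m / 2 * ‖x - b‖ ^ 2))) :=
    (Continuous.tendsto (by fun_prop) 0).mono_left nhdsWithin_le_nhds
  simpa using le_of_tendsto hlim (eventually_of_mem (Ioo_mem_nhdsGT one_pos) hchord)

theorem sub_sub_sub_le_of_hasGradientAt {H : Type*} [NormedAddCommGroup H]
    [InnerProductSpace ℝ H] [CompleteSpace H] {f : H → ℝ} {G : H → H} {β : ℝ}
    (hf : ∀ x, HasGradientAt f (G x) x) (hG : ∀ x y, ‖G x - G y‖ ≤ β * ‖x - y‖) (c d v : H) :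
    f (c + v) - f c - (f (d + v) - f d) ≤ β * ‖v‖ * ‖c - d‖ := by
  have hderiv : ∀ x,
      HasFDerivAt (fun x => f (x + v) - f x) (toDual ℝ H (G (x + v) - G x)) x := by
    intro x
    have hshift := (hf (x + v)).hasFDerivAt.comp x ((hasFDerivAt_id x).add_const v)
    rw [map_sub, ← ContinuousLinearMap.comp_id (toDual ℝ H (G (x + v)))]
    exact hshift.sub (hf x).hasFDerivAt
  have hbound : ∀ x, ‖toDual ℝ H (G (x + v) - G x)‖ ≤ β * ‖v‖ := fun x => by
    simpa only [LinearIsometryEquiv.norm_map, add_sub_cancel_left] using hG (x + v) x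
  exact (le_abs_self _).trans <| convex_univ.norm_image_sub_le_of_norm_hasFDerivWithin_le
    (fun x _ => (hderiv x).hasFDerivWithinAt) (fun x _ => hbound x) (mem_univ d) (mem_univ c)

/-- **Lipschitzness of the maximizer map** (first part of Lemma 2 in the paper).
Let `f : ℝ^n × ℝ^k → ℝ` (with the product carrying the Euclidean `ℓ²` structure, encoded via
`WithLp 2`) be differentiable with `β`-Lipschitz gradient, and suppose `δ ↦ f (w, δ)` is
`μ`-strongly concave for every `w` (i.e. `δ ↦ f (w, δ) + (μ/2)‖δ‖²` is concave). If `g` is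
concave and `δ ↦ f (w, δ) + g δ` attains its maximum at `δ*(w)`, then `w ↦ δ*(w)` is
`(β/μ)`-Lipschitz. -/
theorem stmt3 (n k : ℕ) (β μ : ℝ) (hβ : 0 < β) (hμ : 0 < μ)
    (f : WithLp 2 (EuclideanSpace ℝ (Fin n) × EuclideanSpace ℝ (Fin k)) → ℝ)
    (G : WithLp 2 (EuclideanSpace ℝ (Fin n) × EuclideanSpace ℝ (Fin k)) →
      WithLp 2 (EuclideanSpace ℝ (Fin n) × EuclideanSpace ℝ (Fin k)))
    (hG : ∀ p, HasGradientAt f (G p) p)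
    (hG_lip : ∀ p q, ‖G p - G q‖ ≤ β * ‖p - q‖)
    (hconc : ∀ w : EuclideanSpace ℝ (Fin n), ConcaveOn ℝ Set.univ
      (fun δ : EuclideanSpace ℝ (Fin k) =>
        f ((WithLp.equiv 2 (EuclideanSpace ℝ (Fin n) × EuclideanSpace ℝ (Fin k))).symm (w, δ))
          + (μ / 2) * ‖δ‖ ^ 2))
    (g : EuclideanSpace ℝ (Fin k) → ℝ) (hg : ConcaveOn ℝ Set.univ g)
    (δstar : EuclideanSpace ℝ (Fin n) → EuclideanSpace ℝ (Fin k))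
    (hδstar : ∀ w δ,
      f ((WithLp.equiv 2 (EuclideanSpace ℝ (Fin n) × EuclideanSpace ℝ (Fin k))).symm (w, δ))
          + g δ ≤
        f ((WithLp.equiv 2 (EuclideanSpace ℝ (Fin n) × EuclideanSpace ℝ (Fin k))).symm
            (w, δstar w)) + g (δstar w)) :
    ∀ w₁ w₂, ‖δstar w₁ - δstar w₂‖ ≤ (β / μ) * ‖w₁ - w₂‖ := by
  simp only [WithLp.equiv_symm_apply] at hconc hδstar
  have hgrowth : ∀ w δ, f (WithLp.toLp 2 (w, δ)) + g δ + μ / 2 * ‖δ - δstar w‖ ^ 2 ≤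
      f (WithLp.toLp 2 (w, δstar w)) + g (δstar w) := fun w δ => by
    refine StrongConcaveOn.add_mul_norm_sq_le_of_isMaxOn
      (f := fun δ => f (WithLp.toLp 2 (w, δ)) + g δ) (strongConcaveOn_iff_convex.2 ?_)
      (fun δ _ => hδstar w δ) (mem_univ _) (mem_univ δ)
    exact ((hconc w).add hg).congr fun δ _ => add_right_comm _ _ _
  intro w₁ w₂
  have hmixed := sub_sub_sub_le_of_hasGradientAt hG hG_lip (WithLp.toLp 2 (w₁, δstar w₂))
    (WithLp.toLp 2 (w₂, δstar w₂)) (WithLp.toLp 2 (0, δstar w₁ - δstar w₂))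
  simp only [← WithLp.toLp_add, ← WithLp.toLp_sub, Prod.mk_add_mk, Prod.mk_sub_mk, add_zero,
    sub_self, add_sub_cancel, WithLp.norm_toLp_fst, WithLp.norm_toLp_snd] at hmixed
  have h₁ := hgrowth w₁ (δstar w₂)
  have h₂ := hgrowth w₂ (δstar w₁)
  rw [norm_sub_rev] at h₁
  have hkey : μ * ‖δstar w₁ - δstar w₂‖ ^ 2 ≤ β * ‖δstar w₁ - δstar w₂‖ * ‖w₁ - w₂‖ := by
    linarith
  obtain hzero | hpos := (norm_nonneg (δstar w₁ - δstar w₂)).eq_or_lt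
  · rw [← hzero]
    positivity
  · rw [div_mul_eq_mul_div, le_div_iff₀ hμ]
    nlinarith
end

section
/- Let f : ℝ^n × ℝ^k → ℝ be differentiable with β-Lipschitz gradient on ℝ^n × ℝ^k (β > 0), and suppose that for every w ∈ ℝ^n the map δ ↦ f(w, δ) is μ-strongly concave (μ > 0). Let g : ℝ^k → ℝ be concave, and suppose that for every w the function δ ↦ f(w, δ) + g(δ) attains its maximum at a (necessarily unique) point δ*(w) ∈ ℝ^k. Then the value function F(w) := max_{δ} ( f(w, δ) + g(δ) ) is differentiable with ∇F(w) = ∇_w f(w, δ*(w)), and ∇F is (β + β²/μ)-Lipschitz: ‖∇F(w₁) − ∇F(w₂)‖ ≤ β(1 + β/μ)‖w₁ − w₂‖ for all w₁, w₂ ∈ ℝ^n. -/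
/-!
Adding the strong-concavity inequalities of `δ ↦ f (w, δ) + g δ` at its maximizers `δ*(w₁)` and
`δ*(w₂)` bounds `μ ‖δ*(w₁) - δ*(w₂)‖²` by a mixed difference of `f`, which the `β`-Lipschitz
gradient bounds by `β ‖w₁ - w₂‖ ‖δ*(w₁) - δ*(w₂)‖`; so `δ*` is `β / μ`-Lipschitz.
The increment `F (w + h) - F w` is squeezed between the increments of `f (·, δ*(w))` and
`f (·, δ*(w + h))`, which differ by a mixed difference of order `β² / μ ‖h‖²`. Hence
`∇F(w) = ∇_w f (w, δ*(w))`, and `∇F` inherits its Lipschitz bound from `∇f` and `δ*`.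
-/

open InnerProductSpace Filter Topology Asymptotics WithLp

theorem StrongConcaveOn.add_sq_norm_sub_le_of_isMaxOn {E : Type*} [NormedAddCommGroup E]
    [NormedSpace ℝ E] {s : Set E} {m : ℝ} {φ : E → ℝ} (hφ : StrongConcaveOn s m φ)
    {u v : E} (hu : u ∈ s) (hv : v ∈ s) (hmax : IsMaxOn φ s u) :
    φ v + m / 2 * ‖u - v‖ ^ 2 ≤ φ u := by
  have key : ∀ᶠ t in 𝓝[>] (0 : ℝ), φ v + m / 2 * (1 - t) * ‖u - v‖ ^ 2 ≤ φ u := by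
    filter_upwards [Ioo_mem_nhdsGT one_pos] with t ⟨ht0, ht1⟩
    have hab : 1 - t + t = 1 := sub_add_cancel 1 t
    have hcomb := hφ.2 hu hv (sub_nonneg.2 ht1.le) ht0.le hab
    have hle := hmax (hφ.1 hu hv (sub_nonneg.2 ht1.le) ht0.le hab)
    simp only [smul_eq_mul, Set.mem_ofPred_eq] at hcomb hle
    -- `hcomb` and `hle` give `t * (φ v + m / 2 * (1 - t) * ‖u - v‖ ^ 2) ≤ t * φ u`
    nlinarith
  have hlim : Tendsto (fun t : ℝ => φ v + m / 2 * (1 - t) * ‖u - v‖ ^ 2) (𝓝[>] 0)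
      (𝓝 (φ v + m / 2 * (1 - 0) * ‖u - v‖ ^ 2)) :=
    ((continuous_const.mul (continuous_const.sub continuous_id)).mul
      continuous_const |>.const_add _ |>.tendsto 0).mono_left nhdsWithin_le_nhds
  simpa using le_of_tendsto hlim key

theorem abs_sub_le_of_norm_gradient_le {E : Type*} [NormedAddCommGroup E]
    [InnerProductSpace ℝ E] [CompleteSpace E] {φ : E → ℝ} {φ' : E → E} {C : ℝ}
    (hφ : ∀ x, HasGradientAt φ (φ' x) x) (hC : ∀ x, ‖φ' x‖ ≤ C) (x y : E) :
    |φ x - φ y| ≤ C * ‖x - y‖ :=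
  convex_univ.norm_image_sub_le_of_norm_hasFDerivWithin_le
    (f' := fun x => toDual ℝ E (φ' x)) (fun x _ => (hφ x).hasFDerivAt.hasFDerivWithinAt)
    (fun x _ => by simpa using hC x) (Set.mem_univ y) (Set.mem_univ x)

section Product

variable {E F : Type*} [NormedAddCommGroup E] [NormedAddCommGroup F]
  {G : WithLp 2 (E × F) → WithLp 2 (E × F)} {β : ℝ}

theorem norm_fst_sub_le_of_lipschitz (hβ : 0 ≤ β) (hG_lip : ∀ p q, ‖G p - G q‖ ≤ β * ‖p - q‖)
    (x₁ x₂ : E) (y₁ y₂ : F) :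
    ‖(G (toLp 2 (x₁, y₁))).fst - (G (toLp 2 (x₂, y₂))).fst‖ ≤ β * (‖x₁ - x₂‖ + ‖y₁ - y₂‖) := by
  have hsplit : toLp 2 (x₁, y₁) - toLp 2 (x₂, y₂) = toLp 2 (x₁ - x₂, 0) + toLp 2 (0, y₁ - y₂) := by
    simp only [← toLp_sub, ← toLp_add, Prod.mk_sub_mk, Prod.mk_add_mk, add_zero, zero_add]
  calc _ = ‖(G (toLp 2 (x₁, y₁)) - G (toLp 2 (x₂, y₂))).fst‖ := by rw [sub_fst]
    _ ≤ ‖G (toLp 2 (x₁, y₁)) - G (toLp 2 (x₂, y₂))‖ := WithLp.norm_fst_le E _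
    _ ≤ β * ‖toLp 2 (x₁, y₁) - toLp 2 (x₂, y₂)‖ := hG_lip _ _
    _ ≤ β * (‖x₁ - x₂‖ + ‖y₁ - y₂‖) := by
      rw [hsplit]
      gcongr
      exact (norm_add_le _ _).trans_eq (by rw [norm_toLp_fst, norm_toLp_snd])

variable [InnerProductSpace ℝ E] [CompleteSpace E] [InnerProductSpace ℝ F] [CompleteSpace F]
  {f : WithLp 2 (E × F) → ℝ}

theorem HasGradientAt.comp_toLp_left {x : E} {y : F} {g : WithLp 2 (E × F)}
    (hf : HasGradientAt f g (toLp 2 (x, y))) :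
    HasGradientAt (fun x' => f (toLp 2 (x', y))) g.fst x := by
  rw [hasGradientAt_iff_hasFDerivAt] at hf ⊢
  have hι : HasFDerivAt (fun x' => toLp 2 (x', y))
      ((prodContinuousLinearEquiv 2 ℝ E F).symm.toContinuousLinearMap ∘L
        ContinuousLinearMap.inl ℝ E F) x :=
    (prodContinuousLinearEquiv 2 ℝ E F).symm.hasFDerivAt.comp x (hasFDerivAt_prodMk_left x y)
  exact (hf.comp x hι).congr_fderiv (by ext h; simp [prodContinuousLinearEquiv_symm_apply])

theorem HasGradientAt.comp_toLp_right {x : E} {y : F} {g : WithLp 2 (E × F)}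
    (hf : HasGradientAt f g (toLp 2 (x, y))) :
    HasGradientAt (fun y' => f (toLp 2 (x, y'))) g.snd y := by
  rw [hasGradientAt_iff_hasFDerivAt] at hf ⊢
  have hι : HasFDerivAt (fun y' => toLp 2 (x, y'))
      ((prodContinuousLinearEquiv 2 ℝ E F).symm.toContinuousLinearMap ∘L
        ContinuousLinearMap.inr ℝ E F) y :=
    (prodContinuousLinearEquiv 2 ℝ E F).symm.hasFDerivAt.comp y (hasFDerivAt_prodMk_right x y)
  exact (hf.comp y hι).congr_fderiv (by ext h; simp [prodContinuousLinearEquiv_symm_apply])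

theorem abs_sub_sub_sub_le_of_lipschitz_gradient (hG : ∀ p, HasGradientAt f (G p) p)
    (hG_lip : ∀ p q, ‖G p - G q‖ ≤ β * ‖p - q‖) (x₁ x₂ : E) (y₁ y₂ : F) :
    |f (toLp 2 (x₁, y₁)) - f (toLp 2 (x₂, y₁)) - (f (toLp 2 (x₁, y₂)) - f (toLp 2 (x₂, y₂)))|
      ≤ β * ‖x₁ - x₂‖ * ‖y₁ - y₂‖ := by
  have hdiff : ∀ y, HasGradientAt (fun y' => f (toLp 2 (x₁, y')) - f (toLp 2 (x₂, y')))
      (G (toLp 2 (x₁, y)) - G (toLp 2 (x₂, y))).snd y := fun y => by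
    rw [hasGradientAt_iff_hasFDerivAt, sub_snd, map_sub]
    exact (hG _).comp_toLp_right.hasFDerivAt.sub (hG _).comp_toLp_right.hasFDerivAt
  have hbound : ∀ y, ‖(G (toLp 2 (x₁, y)) - G (toLp 2 (x₂, y))).snd‖ ≤ β * ‖x₁ - x₂‖ := by
    intro y
    calc _ ≤ ‖G (toLp 2 (x₁, y)) - G (toLp 2 (x₂, y))‖ := WithLp.norm_snd_le E _
      _ ≤ β * ‖toLp 2 (x₁, y) - toLp 2 (x₂, y)‖ := hG_lip _ _
      _ = β * ‖x₁ - x₂‖ := by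
        rw [← toLp_sub, Prod.mk_sub_mk, sub_self, norm_toLp_fst]
  simpa only [mul_assoc] using abs_sub_le_of_norm_gradient_le hdiff hbound y₁ y₂

end Product

section ValueFunction

variable {E Y : Type*} [NormedAddCommGroup E] [NormedAddCommGroup Y]
  {Φ : E → Y → ℝ} {δstar : E → Y} {L : ℝ}

theorem norm_sub_le_of_strongConcaveOn_of_isMax [NormedSpace ℝ Y] {μ : ℝ} (hμ : 0 < μ)
    (hL : 0 ≤ L) (hconc : ∀ w, StrongConcaveOn Set.univ μ (Φ w))
    (hmax : ∀ w δ, Φ w δ ≤ Φ w (δstar w))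
    (hmixed : ∀ w₁ w₂ δ₁ δ₂,
      Φ w₁ δ₁ - Φ w₂ δ₁ - (Φ w₁ δ₂ - Φ w₂ δ₂) ≤ L * ‖w₁ - w₂‖ * ‖δ₁ - δ₂‖) (w₁ w₂ : E) :
    ‖δstar w₁ - δstar w₂‖ ≤ L / μ * ‖w₁ - w₂‖ := by
  have hquad (w δ) : Φ w δ + μ / 2 * ‖δstar w - δ‖ ^ 2 ≤ Φ w (δstar w) :=
    (hconc w).add_sq_norm_sub_le_of_isMaxOn (Set.mem_univ _) (Set.mem_univ _)
      fun δ _ => hmax w δ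
  have h₁ := hquad w₁ (δstar w₂)
  have h₂ := hquad w₂ (δstar w₁)
  have h₃ := hmixed w₁ w₂ (δstar w₁) (δstar w₂)
  rw [norm_sub_rev] at h₂
  rw [div_mul_eq_mul_div, le_div_iff₀ hμ]
  -- adding `h₁` and `h₂` gives `μ d ^ 2 ≤ L ‖w₁ - w₂‖ d` for `d = ‖δstar w₁ - δstar w₂‖`
  nlinarith [norm_nonneg (δstar w₁ - δstar w₂), mul_nonneg hL (norm_nonneg (w₁ - w₂))]

theorem hasGradientAt_of_isMax_of_lipschitz [InnerProductSpace ℝ E] [CompleteSpace E] {K : ℝ}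
    (hL : 0 ≤ L) (hmax : ∀ w δ, Φ w δ ≤ Φ w (δstar w))
    (hmixed : ∀ w₁ w₂ δ₁ δ₂,
      Φ w₁ δ₁ - Φ w₂ δ₁ - (Φ w₁ δ₂ - Φ w₂ δ₂) ≤ L * ‖w₁ - w₂‖ * ‖δ₁ - δ₂‖)
    (hlip : ∀ w₁ w₂, ‖δstar w₁ - δstar w₂‖ ≤ K * ‖w₁ - w₂‖) {w g₀ : E}
    (hslice : HasGradientAt (fun w' => Φ w' (δstar w)) g₀ w) :
    HasGradientAt (fun w' => Φ w' (δstar w')) g₀ w := by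
  rw [hasGradientAt_iff_isLittleO_nhds_zero] at hslice ⊢
  set ψ : E → ℝ := fun h =>
    Φ (w + h) (δstar (w + h)) - Φ w (δstar w) - (Φ (w + h) (δstar w) - Φ w (δstar w))
  -- `ψ h` lies between `0` and the mixed difference at `w + h, w, δstar (w + h), δstar w`
  have hψ : ∀ h, ‖ψ h‖ ≤ L * K * ‖h‖ ^ 2 := by
    intro h
    have hlow := hmax (w + h) (δstar w)
    have hup := hmax w (δstar (w + h))
    have hmix := hmixed (w + h) w (δstar (w + h)) (δstar w)
    have hδ : L * ‖h‖ * ‖δstar (w + h) - δstar w‖ ≤ L * ‖h‖ * (K * ‖h‖) := by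
      gcongr
      simpa using hlip (w + h) w
    rw [add_sub_cancel_left] at hmix
    rw [Real.norm_eq_abs, abs_le]
    constructor <;> nlinarith
  have hψo : ψ =o[𝓝 0] fun h => h :=
    (IsBigO.of_bound (L * K) (Eventually.of_forall fun h => by
      simpa [abs_of_nonneg (sq_nonneg ‖h‖)] using hψ h)).trans_isLittleO
      (isLittleO_norm_pow_id one_lt_two)
  refine (hψo.add hslice).congr_left fun h => ?_
  simp only [ψ]
  ring

end ValueFunction

/-- **Smoothness of the value function** (second part of Lemma 2 in the paper).
Let `f : ℝ^n × ℝ^k → ℝ` (product with Euclidean `ℓ²` structure via `WithLp 2`) be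
differentiable with `β`-Lipschitz gradient `G`, with `δ ↦ f (w, δ)` `μ`-strongly concave for
every `w`, let `g` be concave, and suppose `δ ↦ f (w, δ) + g δ` attains its maximum at
`δ*(w)`. Then `F(w) := max_δ (f (w, δ) + g δ)` is differentiable with
`∇F(w) = ∇_w f (w, δ*(w))` (the first block of the full gradient), and `∇F` is
`(β + β²/μ)`-Lipschitz. -/
theorem stmt4 (n k : ℕ) (β μ : ℝ) (hβ : 0 < β) (hμ : 0 < μ)
    (f : WithLp 2 (EuclideanSpace ℝ (Fin n) × EuclideanSpace ℝ (Fin k)) → ℝ)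
    (G : WithLp 2 (EuclideanSpace ℝ (Fin n) × EuclideanSpace ℝ (Fin k)) →
      WithLp 2 (EuclideanSpace ℝ (Fin n) × EuclideanSpace ℝ (Fin k)))
    (hG : ∀ p, HasGradientAt f (G p) p)
    (hG_lip : ∀ p q, ‖G p - G q‖ ≤ β * ‖p - q‖)
    (hconc : ∀ w : EuclideanSpace ℝ (Fin n), ConcaveOn ℝ Set.univ
      (fun δ : EuclideanSpace ℝ (Fin k) =>
        f ((WithLp.equiv 2 (EuclideanSpace ℝ (Fin n) × EuclideanSpace ℝ (Fin k))).symm (w, δ))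
          + (μ / 2) * ‖δ‖ ^ 2))
    (g : EuclideanSpace ℝ (Fin k) → ℝ) (hg : ConcaveOn ℝ Set.univ g)
    (δstar : EuclideanSpace ℝ (Fin n) → EuclideanSpace ℝ (Fin k))
    (hδstar : ∀ w δ,
      f ((WithLp.equiv 2 (EuclideanSpace ℝ (Fin n) × EuclideanSpace ℝ (Fin k))).symm (w, δ))
          + g δ ≤
        f ((WithLp.equiv 2 (EuclideanSpace ℝ (Fin n) × EuclideanSpace ℝ (Fin k))).symm
            (w, δstar w)) + g (δstar w))
    (Gw : EuclideanSpace ℝ (Fin n) → EuclideanSpace ℝ (Fin n))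
    (hGw : ∀ w, Gw w =
      (WithLp.equiv 2 (EuclideanSpace ℝ (Fin n) × EuclideanSpace ℝ (Fin k))
        (G ((WithLp.equiv 2 (EuclideanSpace ℝ (Fin n) × EuclideanSpace ℝ (Fin k))).symm
          (w, δstar w)))).1)
    (F : EuclideanSpace ℝ (Fin n) → ℝ)
    (hF : ∀ w, F w = ⨆ δ : EuclideanSpace ℝ (Fin k),
      (f ((WithLp.equiv 2 (EuclideanSpace ℝ (Fin n) × EuclideanSpace ℝ (Fin k))).symm (w, δ))
        + g δ)) :
    (∀ w, HasGradientAt F (Gw w) w) ∧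
      ∀ w₁ w₂, ‖Gw w₁ - Gw w₂‖ ≤ (β + β ^ 2 / μ) * ‖w₁ - w₂‖ := by
  simp only [WithLp.equiv_symm_apply, WithLp.equiv_apply, ofLp_fst] at hconc hδstar hGw hF
  set Φ : EuclideanSpace ℝ (Fin n) → EuclideanSpace ℝ (Fin k) → ℝ :=
    fun w δ => f (toLp 2 (w, δ)) + g δ
  have hΦconc : ∀ w, StrongConcaveOn Set.univ μ (Φ w) := fun w =>
    strongConcaveOn_iff_convex.2 <| ((hconc w).add hg).congr fun δ _ => by
      simp only [Φ, Pi.add_apply]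
      ring
  have hmixed : ∀ w₁ w₂ δ₁ δ₂,
      Φ w₁ δ₁ - Φ w₂ δ₁ - (Φ w₁ δ₂ - Φ w₂ δ₂) ≤ β * ‖w₁ - w₂‖ * ‖δ₁ - δ₂‖ := by
    intro w₁ w₂ δ₁ δ₂
    have := abs_sub_sub_sub_le_of_lipschitz_gradient hG hG_lip w₁ w₂ δ₁ δ₂
    simp only [Φ]
    linarith [(abs_le.1 this).2]
  have hδlip := norm_sub_le_of_strongConcaveOn_of_isMax hμ hβ.le hΦconc hδstar hmixed
  have hFeq : F = fun w => Φ w (δstar w) := funext fun w => (hF w).trans <|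
    le_antisymm (ciSup_le (hδstar w)) (le_ciSup ⟨_, Set.forall_mem_range.2 (hδstar w)⟩ _)
  refine ⟨fun w => ?_, fun w₁ w₂ => ?_⟩
  · rw [hFeq, hGw]
    exact hasGradientAt_of_isMax_of_lipschitz hβ.le hδstar hmixed hδlip
      ((hG _).comp_toLp_left.hasFDerivAt.add_const _)
  · rw [hGw, hGw]
    calc _ ≤ β * (‖w₁ - w₂‖ + ‖δstar w₁ - δstar w₂‖) :=
          norm_fst_sub_le_of_lipschitz hβ.le hG_lip _ _ _ _
      _ ≤ β * (‖w₁ - w₂‖ + β / μ * ‖w₁ - w₂‖) := by gcongr; exact hδlip w₁ w₂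
      _ = (β + β ^ 2 / μ) * ‖w₁ - w₂‖ := by ring
end

section
/- Let h₁, h₂ : ℝ^k → ℝ be differentiable, with h₁ concave and h₂ μ-strongly concave (μ > 0). Suppose δ₁* is a global maximizer of h₁ and δ₂* is the global maximizer of h₂. Then μ‖δ₁* − δ₂*‖² ≤ ⟨δ₂* − δ₁*, ∇h₂(δ₁*) − ∇h₁(δ₁*)⟩, and consequently ‖δ₁* − δ₂*‖ ≤ (1/μ)‖∇h₂(δ₁*) − ∇h₁(δ₁*)‖. -/
/-!
The gradient `G₂ + μ • id` of the concave function `h₂ + (μ/2)‖·‖²` is monotone decreasing,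
as one sees by adding its tangent-plane inequalities at `δ₁` and `δ₂`. Since both `G₂ δ₂` and
`G₁ δ₁` vanish at the maximizers, this monotonicity between `δ₁` and `δ₂` is the first claim;
Cauchy–Schwarz turns it into the second.
-/

open scoped RealInnerProductSpace
open Set

section Gradient

variable {E : Type*} [NormedAddCommGroup E] [InnerProductSpace ℝ E] [CompleteSpace E]
  {f : E → ℝ} {g gx gy x y : E}

theorem IsLocalMax.hasGradientAt_eq_zero (hf : IsLocalMax f x) (hg : HasGradientAt f g x) :
    g = 0 := by
  simpa using hf.hasFDerivAt_eq_zero hg.hasFDerivAt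

theorem HasGradientAt.add_half_mul_norm_sq (hg : HasGradientAt f g x) (c : ℝ) :
    HasGradientAt (fun y => f y + c / 2 * ‖y‖ ^ 2) (g + c • x) x := by
  rw [hasGradientAt_iff_hasFDerivAt] at hg ⊢
  refine (hg.add ((hasStrictFDerivAt_norm_sq x).hasFDerivAt.const_mul (c / 2))).congr_fderiv ?_
  ext v
  simp
  ring

theorem ConcaveOn.le_add_inner_of_hasGradientAt (hf : ConcaveOn ℝ univ f)
    (hg : HasGradientAt f g x) (y : E) : f y ≤ f x + ⟪g, y - x⟫ := by
  set φ := f ∘ AffineMap.lineMap (k := ℝ) x y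
  have hφ : ConcaveOn ℝ univ φ := hf.comp_affineMap _
  have hφ' : HasDerivAt φ ⟪g, y - x⟫ 0 := by
    have hg' : HasFDerivAt f (InnerProductSpace.toDual ℝ E g)
        (AffineMap.lineMap x y (0 : ℝ)) := by
      rw [AffineMap.lineMap_apply_zero]; exact hg.hasFDerivAt
    simpa using hg'.comp_hasDerivAt (0 : ℝ) AffineMap.hasDerivAt_lineMap
  have hslope := hφ.slope_le_of_hasDerivAt (mem_univ 0) (mem_univ 1) zero_lt_one hφ'
  simp only [slope_def_field, sub_zero, div_one, φ, Function.comp_apply,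
    AffineMap.lineMap_apply_zero, AffineMap.lineMap_apply_one] at hslope
  linarith

theorem ConcaveOn.inner_sub_gradient_nonpos (hf : ConcaveOn ℝ univ f)
    (hgx : HasGradientAt f gx x) (hgy : HasGradientAt f gy y) : ⟪gx - gy, x - y⟫ ≤ 0 := by
  have hxy := hf.le_add_inner_of_hasGradientAt hgx y
  have hyx := hf.le_add_inner_of_hasGradientAt hgy x
  have hswap : ⟪gx, x - y⟫ = -⟪gx, y - x⟫ := by rw [← inner_neg_right, neg_sub]
  rw [inner_sub_left, hswap]
  linarith

theorem ConcaveOn.mul_norm_sub_sq_le_inner_of_forall_le {μ : ℝ} {G : E → E}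
    (hconc : ConcaveOn ℝ univ fun z => f z + μ / 2 * ‖z‖ ^ 2)
    (hG : ∀ z, HasGradientAt f (G z) z) (hmax : ∀ z, f z ≤ f y) (x : E) :
    μ * ‖x - y‖ ^ 2 ≤ ⟪y - x, G x⟫ := by
  have hGy : G y = 0 := IsLocalMax.hasGradientAt_eq_zero (.of_forall hmax) (hG y)
  have hmono := hconc.inner_sub_gradient_nonpos
    ((hG x).add_half_mul_norm_sq μ) ((hG y).add_half_mul_norm_sq μ)
  have hsplit : ⟪G x + μ • x - (G y + μ • y), x - y⟫ = μ * ‖x - y‖ ^ 2 - ⟪y - x, G x⟫ := by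
    rw [hGy, zero_add, add_sub_assoc, ← smul_sub, inner_add_left, real_inner_smul_left,
      real_inner_self_eq_norm_sq, real_inner_comm, ← neg_sub y x, inner_neg_left]
    ring
  linarith

end Gradient

theorem norm_le_one_div_mul_norm_of_mul_norm_sq_le_inner {E : Type*} [NormedAddCommGroup E]
    [InnerProductSpace ℝ E] {μ : ℝ} (hμ : 0 < μ) {v w : E} (h : μ * ‖v‖ ^ 2 ≤ ⟪v, w⟫) :
    ‖v‖ ≤ 1 / μ * ‖w‖ := by
  rw [one_div, ← div_eq_inv_mul, le_div_iff₀ hμ]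
  rcases (norm_nonneg v).eq_or_lt with hv | hv
  · rw [← hv, zero_mul]; exact norm_nonneg w
  · have hcs : μ * ‖v‖ ^ 2 ≤ ‖v‖ * ‖w‖ := h.trans (real_inner_le_norm v w)
    nlinarith

theorem stmt5_general (k : ℕ) (μ : ℝ) (hμ : 0 < μ)
    (h₁ h₂ : EuclideanSpace ℝ (Fin k) → ℝ)
    (G₁ G₂ : EuclideanSpace ℝ (Fin k) → EuclideanSpace ℝ (Fin k))
    (hG₁ : ∀ δ, HasGradientAt h₁ (G₁ δ) δ)
    (hG₂ : ∀ δ, HasGradientAt h₂ (G₂ δ) δ)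
    (hconc₂ : ConcaveOn ℝ Set.univ fun δ => h₂ δ + (μ / 2) * ‖δ‖ ^ 2)
    (δ₁ δ₂ : EuclideanSpace ℝ (Fin k))
    (hmax₁ : ∀ δ, h₁ δ ≤ h₁ δ₁)
    (hmax₂ : ∀ δ, h₂ δ ≤ h₂ δ₂) :
    μ * ‖δ₁ - δ₂‖ ^ 2 ≤ ⟪δ₂ - δ₁, G₂ δ₁ - G₁ δ₁⟫ ∧
      ‖δ₁ - δ₂‖ ≤ (1 / μ) * ‖G₂ δ₁ - G₁ δ₁‖ := by
  have hG₁δ₁ : G₁ δ₁ = 0 := IsLocalMax.hasGradientAt_eq_zero (.of_forall hmax₁) (hG₁ δ₁)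
  have hkey : μ * ‖δ₁ - δ₂‖ ^ 2 ≤ ⟪δ₂ - δ₁, G₂ δ₁ - G₁ δ₁⟫ := by
    rw [hG₁δ₁, sub_zero]
    exact hconc₂.mul_norm_sub_sq_le_inner_of_forall_le hG₂ hmax₂ δ₁
  rw [norm_sub_rev δ₁ δ₂] at hkey ⊢
  exact ⟨hkey, norm_le_one_div_mul_norm_of_mul_norm_sq_le_inner hμ hkey⟩

/-- Comparison of maximizers of a concave and a strongly concave function.
If `δ₁*` is a global maximizer of a differentiable concave `h₁` and `δ₂*` is the global
maximizer of a differentiable `μ`-strongly concave `h₂`, then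
`μ‖δ₁* − δ₂*‖² ≤ ⟨δ₂* − δ₁*, ∇h₂(δ₁*) − ∇h₁(δ₁*)⟩` and consequently
`‖δ₁* − δ₂*‖ ≤ (1/μ)‖∇h₂(δ₁*) − ∇h₁(δ₁*)‖`. -/
theorem stmt5 (k : ℕ) (μ : ℝ) (hμ : 0 < μ)
    (h₁ h₂ : EuclideanSpace ℝ (Fin k) → ℝ)
    (G₁ G₂ : EuclideanSpace ℝ (Fin k) → EuclideanSpace ℝ (Fin k))
    (hG₁ : ∀ δ, HasGradientAt h₁ (G₁ δ) δ)
    (hG₂ : ∀ δ, HasGradientAt h₂ (G₂ δ) δ)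
    (hconc₁ : ConcaveOn ℝ Set.univ h₁)
    (hconc₂ : ConcaveOn ℝ Set.univ fun δ => h₂ δ + (μ / 2) * ‖δ‖ ^ 2)
    (δ₁ δ₂ : EuclideanSpace ℝ (Fin k))
    (hmax₁ : ∀ δ, h₁ δ ≤ h₁ δ₁)
    (hmax₂ : ∀ δ, h₂ δ ≤ h₂ δ₂) :
    μ * ‖δ₁ - δ₂‖ ^ 2 ≤ ⟪δ₂ - δ₁, G₂ δ₁ - G₁ δ₁⟫ ∧
      ‖δ₁ - δ₂‖ ≤ (1 / μ) * ‖G₂ δ₁ - G₁ δ₁‖ :=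
  stmt5_general k μ hμ h₁ h₂ G₁ G₂ hG₁ hG₂ hconc₂ δ₁ δ₂ hmax₁ hmax₂
end

section
/- (Proximal operator of the ℓ_{1,2} group norm.) Let A be an m × d real matrix and ξ > 0. The function B ↦ ξ‖B‖_{1,2} + (1/2)‖A − B‖²_F over m × d real matrices has a unique minimizer B̂ given columnwise by B̂_{:,j} = ( max{‖A_{:,j}‖₂ − ξ, 0} / ‖A_{:,j}‖₂ ) · A_{:,j} when A_{:,j} ≠ 0, and B̂_{:,j} = 0 when A_{:,j} = 0, for each column index j = 1, …, d. -/
/-!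
Write `c = (max (‖a‖ - ξ) 0 / ‖a‖) • a`. It satisfies the optimality condition
`a - c ∈ ξ ∂‖·‖(c)`, i.e. `‖a - c‖ ≤ ξ` and `⟪a - c, c⟫ = ξ ‖c‖`. Expanding `‖a - b‖²` around `c`
and applying Cauchy–Schwarz to `⟪a - c, b⟫` then gives the quadratic growth bound
`f(c) + ½‖b - c‖² ≤ f(b)` for `f(b) = ξ‖b‖ + ½‖a - b‖²`, which yields existence and uniqueness of
the minimizer at once. The matrix objective is the sum of these functions over the columns.
-/

open Finset RealInnerProductSpace

section BlockSoftThreshold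

variable {E : Type*} [NormedAddCommGroup E] [InnerProductSpace ℝ E]

noncomputable def blockSoftThreshold (ξ : ℝ) (a : E) : E :=
  (max (‖a‖ - ξ) 0 / ‖a‖) • a

theorem add_half_norm_sub_sq_le_of_optimality {ξ : ℝ} {a c : E} (hnorm : ‖a - c‖ ≤ ξ)
    (hinner : ⟪a - c, c⟫ = ξ * ‖c‖) (b : E) :
    ξ * ‖c‖ + (1 / 2) * ‖a - c‖ ^ 2 + (1 / 2) * ‖b - c‖ ^ 2 ≤
      ξ * ‖b‖ + (1 / 2) * ‖a - b‖ ^ 2 := by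
  have hexpand : ‖a - b‖ ^ 2 = ‖a - c‖ ^ 2 - 2 * ⟪a - c, b - c⟫ + ‖b - c‖ ^ 2 := by
    rw [← norm_sub_sq_real, sub_sub_sub_cancel_right]
  have hcs : ⟪a - c, b⟫ ≤ ξ * ‖b‖ :=
    (real_inner_le_norm _ _).trans (mul_le_mul_of_nonneg_right hnorm (norm_nonneg b))
  rw [inner_sub_right] at hexpand
  linarith

theorem blockSoftThreshold_of_norm_le {ξ : ℝ} {a : E} (h : ‖a‖ ≤ ξ) :
    blockSoftThreshold ξ a = 0 := by
  simp [blockSoftThreshold, max_eq_right (sub_nonpos.2 h)]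

theorem blockSoftThreshold_optimality {ξ : ℝ} (hξ : 0 ≤ ξ) (a : E) :
    ‖a - blockSoftThreshold ξ a‖ ≤ ξ ∧
      ⟪a - blockSoftThreshold ξ a, blockSoftThreshold ξ a⟫ = ξ * ‖blockSoftThreshold ξ a‖ := by
  rcases le_or_gt ‖a‖ ξ with h | h
  · simp [blockSoftThreshold_of_norm_le h, h]
  have hr : 0 < ‖a‖ := hξ.trans_lt h
  have hc : blockSoftThreshold ξ a = ((‖a‖ - ξ) / ‖a‖) • a := by
    rw [blockSoftThreshold, max_eq_left (sub_nonneg.2 h.le)]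
  have hac : a - blockSoftThreshold ξ a = (ξ / ‖a‖) • a := by
    rw [hc, ← one_sub_div hr.ne', sub_smul, one_smul, sub_sub_cancel]
  rw [hac, hc, norm_smul, norm_smul, real_inner_smul_left, real_inner_smul_right,
    real_inner_self_eq_norm_sq, Real.norm_of_nonneg (div_nonneg hξ hr.le),
    Real.norm_of_nonneg (div_nonneg (sub_nonneg.2 h.le) hr.le)]
  constructor
  · rw [div_mul_cancel₀ _ hr.ne']
  · field_simp

theorem add_half_norm_sub_blockSoftThreshold_sq_le {ξ : ℝ} (hξ : 0 ≤ ξ) (a b : E) :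
    ξ * ‖blockSoftThreshold ξ a‖ + (1 / 2) * ‖a - blockSoftThreshold ξ a‖ ^ 2
        + (1 / 2) * ‖b - blockSoftThreshold ξ a‖ ^ 2 ≤
      ξ * ‖b‖ + (1 / 2) * ‖a - b‖ ^ 2 :=
  add_half_norm_sub_sq_le_of_optimality (blockSoftThreshold_optimality hξ a).1
    (blockSoftThreshold_optimality hξ a).2 b

end BlockSoftThreshold

namespace Matrix

variable {m n : Type*}

noncomputable def euclideanCol (B : Matrix m n ℝ) (j : n) : EuclideanSpace ℝ m :=
  WithLp.toLp 2 (Bᵀ j)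

@[simp]
theorem euclideanCol_apply (B : Matrix m n ℝ) (j : n) (i : m) : B.euclideanCol j i = B i j :=
  rfl

theorem norm_euclideanCol [Fintype m] (B : Matrix m n ℝ) (j : n) :
    ‖B.euclideanCol j‖ = √(∑ i, B i j ^ 2) := by
  simp [euclideanCol, EuclideanSpace.norm_eq]

theorem norm_euclideanCol_sub_sq [Fintype m] (A B : Matrix m n ℝ) (j : n) :
    ‖A.euclideanCol j - B.euclideanCol j‖ ^ 2 = ∑ i, (A i j - B i j) ^ 2 := by
  simp [euclideanCol, EuclideanSpace.real_norm_sq_eq]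

theorem groupLasso_eq_sum_euclideanCol [Fintype m] [Fintype n] (ξ : ℝ) (A B : Matrix m n ℝ) :
    ξ * ∑ j, √(∑ i, B i j ^ 2) + (1 / 2) * ∑ i, ∑ j, (A i j - B i j) ^ 2 =
      ∑ j, (ξ * ‖B.euclideanCol j‖
        + (1 / 2) * ‖A.euclideanCol j - B.euclideanCol j‖ ^ 2) := by
  simp only [norm_euclideanCol, norm_euclideanCol_sub_sq]
  rw [sum_comm, sum_add_distrib, mul_sum, mul_sum]

end Matrix

/-- **Proximal operator of the `ℓ_{1,2}` group norm.** For an `m × d` matrix `A` and `ξ > 0`,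
the function `B ↦ ξ‖B‖_{1,2} + (1/2)‖A − B‖²_F` (where `‖B‖_{1,2} = Σⱼ ‖B_{:,j}‖₂`) has a
unique minimizer `B̂` obtained by columnwise block soft-thresholding:
`B̂_{:,j} = (max{‖A_{:,j}‖₂ − ξ, 0}/‖A_{:,j}‖₂)·A_{:,j}` if `A_{:,j} ≠ 0`, else `0`. -/
theorem stmt10 (m d : ℕ) (A : Matrix (Fin m) (Fin d) ℝ) (ξ : ℝ) (hξ : 0 < ξ)
    (Bhat : Matrix (Fin m) (Fin d) ℝ)
    (hBhat_ne : ∀ j : Fin d, (fun i => A i j) ≠ (0 : Fin m → ℝ) → ∀ i,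
      Bhat i j =
        (max (Real.sqrt (∑ i', A i' j ^ 2) - ξ) 0 / Real.sqrt (∑ i', A i' j ^ 2)) * A i j)
    (hBhat_zero : ∀ j : Fin d, (fun i => A i j) = (0 : Fin m → ℝ) → ∀ i, Bhat i j = 0) :
    (∀ B : Matrix (Fin m) (Fin d) ℝ,
        ξ * (∑ j, Real.sqrt (∑ i, Bhat i j ^ 2))
            + (1 / 2) * ∑ i, ∑ j, (A i j - Bhat i j) ^ 2 ≤
          ξ * (∑ j, Real.sqrt (∑ i, B i j ^ 2))
            + (1 / 2) * ∑ i, ∑ j, (A i j - B i j) ^ 2) ∧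
      ∀ B : Matrix (Fin m) (Fin d) ℝ, B ≠ Bhat →
        ξ * (∑ j, Real.sqrt (∑ i, Bhat i j ^ 2))
            + (1 / 2) * ∑ i, ∑ j, (A i j - Bhat i j) ^ 2 <
          ξ * (∑ j, Real.sqrt (∑ i, B i j ^ 2))
            + (1 / 2) * ∑ i, ∑ j, (A i j - B i j) ^ 2 := by
  have hcol : ∀ j, Bhat.euclideanCol j = blockSoftThreshold ξ (A.euclideanCol j) := by
    intro j
    ext i
    by_cases hA : (fun i => A i j) = 0
    · simp [blockSoftThreshold, hBhat_zero j hA i, congrFun hA i]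
    · simp [blockSoftThreshold, Matrix.norm_euclideanCol, hBhat_ne j hA i]
  have hgap : ∀ B : Matrix (Fin m) (Fin d) ℝ,
      ξ * (∑ j, √(∑ i, Bhat i j ^ 2)) + (1 / 2) * ∑ i, ∑ j, (A i j - Bhat i j) ^ 2
          + (1 / 2) * ∑ j, ‖B.euclideanCol j - Bhat.euclideanCol j‖ ^ 2 ≤
        ξ * (∑ j, √(∑ i, B i j ^ 2)) + (1 / 2) * ∑ i, ∑ j, (A i j - B i j) ^ 2 := by
    intro B
    rw [Matrix.groupLasso_eq_sum_euclideanCol, Matrix.groupLasso_eq_sum_euclideanCol, mul_sum,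
      ← sum_add_distrib]
    refine sum_le_sum fun j _ => ?_
    rw [hcol j]
    exact add_half_norm_sub_blockSoftThreshold_sq_le hξ.le (A.euclideanCol j) (B.euclideanCol j)
  refine ⟨fun B => le_of_add_le_of_nonneg_left (hgap B) (by positivity), fun B hB => ?_⟩
  obtain ⟨j, hj⟩ : ∃ j, B.euclideanCol j ≠ Bhat.euclideanCol j := by
    contrapose! hB
    ext i j
    simpa using congrArg (· i) (hB j)
  have hpos : 0 < ∑ j, ‖B.euclideanCol j - Bhat.euclideanCol j‖ ^ 2 :=
    sum_pos' (fun _ _ => by positivity)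
      ⟨j, mem_univ j, pow_pos (norm_pos_iff.2 (sub_ne_zero.2 hj)) 2⟩
  linarith [hgap B]
end

section
/- (Proximal operator of the nuclear norm / singular value thresholding.) Let A be an m × d real matrix with singular value decomposition A = U S Vᵀ, where U is an m × m orthogonal matrix, V is a d × d orthogonal matrix, and S is an m × d matrix whose off-diagonal entries vanish and whose diagonal entries σ₁, …, σ_{min(m,d)} are nonnegative. Let ξ > 0 and let S_ξ be the m × d matrix obtained from S by replacing each diagonal entry σ_i with max{σ_i − ξ, 0}. Then B̂ := U S_ξ Vᵀ is the unique minimizer over m × d real matrices B of ξ‖B‖_* + (1/2)‖A − B‖²_F. -/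
open Matrix

/-- The nuclear norm of a real `m × d` matrix: the trace of the positive semidefinite
square root of `Bᵀ B` (i.e. the sum of the singular values of `B`). -/
noncomputable def nuclearNorm {m d : ℕ} (B : Matrix (Fin m) (Fin d) ℝ) : ℝ :=
  ((((Matrix.posSemidef_conjTranspose_mul_self B).1.eigenvectorUnitary : Matrix (Fin d) (Fin d) ℝ) *
    diagonal (fun i => Real.sqrt ((Matrix.posSemidef_conjTranspose_mul_self B).1.eigenvalues i)) *
    star ((Matrix.posSemidef_conjTranspose_mul_self B).1.eigenvectorUnitary : Matrix (Fin d) (Fin d) ℝ))).trace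

/-!
Both terms of the objective are invariant under `B ↦ Uᵀ * B * V`, so one may take `A = S`
rectangular-diagonal. For every `C` the nuclear norm dominates the sum of the absolute values of
the diagonal entries (Cauchy–Schwarz in an eigenbasis of `Cᵀ * C`), with equality when `C` is
itself rectangular-diagonal. The resulting lower bound `ξ ∑ |C i i| + ½ ‖S - C‖²_F` separates into
the scalar problems `min_c ξ |c| + ½ (σ - c)²`, each solved uniquely by `max (σ - ξ) 0`, and
`Sξ` attains it.
-/

open scoped MatrixOrder ComplexOrder

section Sqrt

variable {𝕜 n n' : Type*} [RCLike 𝕜] [Fintype n] [DecidableEq n] [Fintype n'] [DecidableEq n']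

lemma CFC.sqrt_conj_of_isometry {P : Matrix n n 𝕜} {V : Matrix n' n 𝕜} (hP : 0 ≤ P)
    (hV : Vᴴ * V = 1) :
    CFC.sqrt (V * P * Vᴴ) = V * CFC.sqrt P * Vᴴ := by
  refine CFC.sqrt_unique ?_ ((CFC.sqrt_nonneg P).posSemidef.mul_mul_conjTranspose_same V).nonneg
  calc V * CFC.sqrt P * Vᴴ * (V * CFC.sqrt P * Vᴴ)
      = V * (CFC.sqrt P * (Vᴴ * V) * CFC.sqrt P) * Vᴴ := by simp only [Matrix.mul_assoc]
    _ = V * P * Vᴴ := by rw [hV, Matrix.mul_one, CFC.sqrt_mul_sqrt_self P hP]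

end Sqrt

section Orthogonal

variable {m n p q : Type*} [Fintype m]

lemma Matrix.transpose_mul_self_apply_self (X : Matrix m n ℝ) (k : n) :
    (Xᵀ * X) k k = ∑ i, X i k ^ 2 := by
  simp only [Matrix.mul_apply, Matrix.transpose_apply, sq]

lemma Matrix.trace_transpose_mul_self [Fintype n] (X : Matrix m n ℝ) :
    (Xᵀ * X).trace = ∑ i, ∑ j, X i j ^ 2 := by
  simp only [Matrix.trace, Matrix.diag_apply, Matrix.transpose_mul_self_apply_self]
  exact Finset.sum_comm

lemma Matrix.transpose_mul_self_conj [DecidableEq m] [Fintype p] [Fintype n]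
    {U : Matrix p m ℝ} (hU : Uᵀ * U = 1) (X : Matrix m n ℝ) (V : Matrix q n ℝ) :
    (U * X * Vᵀ)ᵀ * (U * X * Vᵀ) = V * (Xᵀ * X) * Vᵀ := by
  simp only [Matrix.transpose_mul, Matrix.transpose_transpose, Matrix.mul_assoc]
  rw [← Matrix.mul_assoc Uᵀ, hU, Matrix.one_mul]

lemma Matrix.sum_sq_mul_mul_transpose [DecidableEq m] [Fintype p] [Fintype n] [Fintype q]
    [DecidableEq n] {U : Matrix p m ℝ} {V : Matrix q n ℝ} (hU : Uᵀ * U = 1) (hV : Vᵀ * V = 1)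
    (X : Matrix m n ℝ) :
    ∑ i, ∑ j, (U * X * Vᵀ) i j ^ 2 = ∑ i, ∑ j, X i j ^ 2 := by
  rw [← trace_transpose_mul_self, ← trace_transpose_mul_self, transpose_mul_self_conj hU,
    trace_mul_cycle, hV, Matrix.one_mul]

end Orthogonal

section NuclearNorm

variable {m d : ℕ}

lemma nuclearNorm_eq_trace_sqrt (B : Matrix (Fin m) (Fin d) ℝ) :
    nuclearNorm B = (CFC.sqrt (Bᵀ * B)).trace := by
  have hB := Matrix.posSemidef_conjTranspose_mul_self B
  rw [← conjTranspose_eq_transpose_of_trivial, CFC.sqrt_eq_cfc, cfc_nnreal_eq_real _ (Bᴴ * B),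
    hB.1.cfc_eq, nuclearNorm]
  have h : ∀ i, max (hB.1.eigenvalues i) 0 = hB.1.eigenvalues i :=
    fun i => max_eq_left (hB.eigenvalues_nonneg i)
  simp only [IsHermitian.cfc, Unitary.conjStarAlgAut_apply, Function.comp_def, Real.coe_sqrt,
    Real.coe_toNNReal', RCLike.ofReal_real_eq_id, id, h]

lemma nuclearNorm_eq_sum_sqrt_eigenvalues (B : Matrix (Fin m) (Fin d) ℝ) :
    nuclearNorm B = ∑ k, √((Matrix.posSemidef_conjTranspose_mul_self B).1.eigenvalues k) := by
  rw [nuclearNorm, trace_mul_cycle, Unitary.coe_star_mul_self, Matrix.one_mul, trace_diagonal]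

lemma nuclearNorm_mul_mul_transpose {m' d' : ℕ} {U : Matrix (Fin m') (Fin m) ℝ}
    {V : Matrix (Fin d') (Fin d) ℝ} (hU : Uᵀ * U = 1) (hV : Vᵀ * V = 1)
    (C : Matrix (Fin m) (Fin d) ℝ) :
    nuclearNorm (U * C * Vᵀ) = nuclearNorm C := by
  have hV' : Vᴴ * V = 1 := by rwa [conjTranspose_eq_transpose_of_trivial]
  have hC : 0 ≤ Cᵀ * C := by
    simpa using (Matrix.posSemidef_conjTranspose_mul_self C).nonneg
  rw [nuclearNorm_eq_trace_sqrt, nuclearNorm_eq_trace_sqrt, Matrix.transpose_mul_self_conj hU,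
    ← conjTranspose_eq_transpose_of_trivial V, CFC.sqrt_conj_of_isometry hC hV', trace_mul_cycle,
    hV', Matrix.one_mul]

end NuclearNorm

section RectangularDiagonal

variable {m d : ℕ}

def diagAbsSum (C : Matrix (Fin m) (Fin d) ℝ) : ℝ :=
  ∑ p : Fin m × Fin d with (p.1 : ℕ) = p.2, |C p.1 p.2|

lemma sum_diag_abs_mul_abs_le (x : Fin m → ℝ) (y : Fin d → ℝ) :
    ∑ p : Fin m × Fin d with (p.1 : ℕ) = p.2, |x p.1| * |y p.2| ≤
      √(∑ i, x i ^ 2) * √(∑ j, y j ^ 2) := by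
  set D : Finset (Fin m × Fin d) := {p | (p.1 : ℕ) = p.2}
  have hD : ∀ p ∈ (D : Set (Fin m × Fin d)), (p.1 : ℕ) = p.2 := fun p hp =>
    (Finset.mem_filter.mp hp).2
  have hfst : Set.InjOn Prod.fst (D : Set (Fin m × Fin d)) := fun p hp q hq h =>
    Prod.ext h (Fin.ext (by rw [← hD p hp, ← hD q hq, h]))
  have hsnd : Set.InjOn Prod.snd (D : Set (Fin m × Fin d)) := fun p hp q hq h =>
    Prod.ext (Fin.ext (by rw [hD p hp, hD q hq, h])) h
  calc ∑ p ∈ D, |x p.1| * |y p.2|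
      ≤ √(∑ p ∈ D, |x p.1| ^ 2) * √(∑ p ∈ D, |y p.2| ^ 2) := Real.sum_mul_le_sqrt_mul_sqrt _ _ _
    _ ≤ √(∑ i, x i ^ 2) * √(∑ j, y j ^ 2) := by
      simp only [sq_abs]
      gcongr
      · rw [← Finset.sum_image (f := fun i => x i ^ 2) hfst]
        exact Finset.sum_le_univ_sum_of_nonneg fun _ => sq_nonneg _
      · rw [← Finset.sum_image (f := fun j => y j ^ 2) hsnd]
        exact Finset.sum_le_univ_sum_of_nonneg fun _ => sq_nonneg _

lemma diagAbsSum_mul_transpose_le {n : Type*} [Fintype n] (X : Matrix (Fin m) n ℝ)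
    (W : Matrix (Fin d) n ℝ) :
    diagAbsSum (X * Wᵀ) ≤ ∑ k, √(∑ i, X i k ^ 2) * √(∑ j, W j k ^ 2) :=
  calc diagAbsSum (X * Wᵀ)
      ≤ ∑ p : Fin m × Fin d with (p.1 : ℕ) = p.2, ∑ k, |X p.1 k| * |W p.2 k| := by
        refine Finset.sum_le_sum fun p _ => ?_
        simp only [Matrix.mul_apply, Matrix.transpose_apply, ← abs_mul]
        exact Finset.abs_sum_le_sum_abs _ _
    _ = ∑ k, ∑ p : Fin m × Fin d with (p.1 : ℕ) = p.2, |X p.1 k| * |W p.2 k| :=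
        Finset.sum_comm
    _ ≤ ∑ k, √(∑ i, X i k ^ 2) * √(∑ j, W j k ^ 2) :=
        Finset.sum_le_sum fun k _ => sum_diag_abs_mul_abs_le (X · k) (W · k)

lemma diagAbsSum_le_nuclearNorm (C : Matrix (Fin m) (Fin d) ℝ) :
    diagAbsSum C ≤ nuclearNorm C := by
  set hH := (Matrix.posSemidef_conjTranspose_mul_self C).1
  set W : Matrix (Fin d) (Fin d) ℝ := (hH.eigenvectorUnitary : Matrix (Fin d) (Fin d) ℝ)
  have hWW : Wᵀ * W = 1 := by
    have := Unitary.coe_star_mul_self hH.eigenvectorUnitary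
    rwa [star_eq_conjTranspose, conjTranspose_eq_transpose_of_trivial] at this
  have hC : C = C * W * Wᵀ := by rw [Matrix.mul_assoc, mul_eq_one_comm.mp hWW, Matrix.mul_one]
  have hCW : (C * W)ᵀ * (C * W) = diagonal hH.eigenvalues := by
    simpa [W, Matrix.mul_assoc, star_eq_conjTranspose] using
      hH.conjStarAlgAut_star_eigenvectorUnitary
  calc diagAbsSum C = diagAbsSum (C * W * Wᵀ) := by rw [← hC]
    _ ≤ ∑ k, √(∑ i, (C * W) i k ^ 2) * √(∑ j, W j k ^ 2) := diagAbsSum_mul_transpose_le _ _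
    _ = nuclearNorm C := by
      simp only [← Matrix.transpose_mul_self_apply_self, hCW, hWW, diagonal_apply_eq,
        one_apply_eq, Real.sqrt_one, mul_one, nuclearNorm_eq_sum_sqrt_eigenvalues]

lemma nuclearNorm_eq_diagAbsSum {T : Matrix (Fin m) (Fin d) ℝ}
    (hT : ∀ (i : Fin m) (j : Fin d), (i : ℕ) ≠ j → T i j = 0) :
    nuclearNorm T = diagAbsSum T := by
  set t : Fin d → ℝ := fun j => ∑ i, |T i j|
  have hcol : ∀ (i i' : Fin m) j, i ≠ i' → |T i j| * |T i' j| = 0 := by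
    intro i i' j h
    by_cases hi : (i : ℕ) = j
    · rw [hT i' j fun h' => h (Fin.ext (hi.trans h'.symm)), abs_zero, mul_zero]
    · rw [hT i j hi, abs_zero, zero_mul]
  have hrow : ∀ i (j j' : Fin d), j ≠ j' → T i j * T i j' = 0 := by
    intro i j j' h
    by_cases hi : (i : ℕ) = j
    · rw [hT i j' fun h' => h (Fin.ext (hi.symm.trans h')), mul_zero]
    · rw [hT i j hi, zero_mul]
  have hTT : Tᵀ * T = diagonal fun j => t j ^ 2 := by
    ext j j'
    rw [Matrix.mul_apply, diagonal_apply]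
    split_ifs with h
    · subst h
      rw [sq, Finset.sum_mul_sum]
      refine Finset.sum_congr rfl fun i _ => ?_
      rw [Finset.sum_eq_single i (fun i' _ h => hcol i i' j (Ne.symm h)) (by simp),
        transpose_apply, abs_mul_abs_self]
    · exact Finset.sum_eq_zero fun i _ => hrow i j j' h
  have hsqrt : CFC.sqrt (Tᵀ * T) = diagonal t := by
    rw [hTT]
    refine CFC.sqrt_unique ?_ ?_
    · rw [diagonal_mul_diagonal]; simp only [sq]
    · exact (posSemidef_diagonal_iff.mpr fun j => Finset.sum_nonneg fun i _ => abs_nonneg _).nonneg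
  rw [nuclearNorm_eq_trace_sqrt, hsqrt, trace_diagonal, diagAbsSum, Finset.sum_filter_of_ne,
    Fintype.sum_prod_type_right]
  intro p _ hp
  by_contra h
  exact hp (by rw [hT _ _ h, abs_zero])

end RectangularDiagonal

lemma soft_threshold_objective_lt {w σ t : ℝ} (hw : 0 ≤ w) (hσ : 0 ≤ σ)
    (ht : t ≠ max (σ - w) 0) :
    w * |max (σ - w) 0| + (σ - max (σ - w) 0) ^ 2 / 2 < w * |t| + (σ - t) ^ 2 / 2 := by
  rcases le_or_gt σ w with h | h
  · rw [max_eq_right (by linarith)] at ht ⊢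
    have : 0 < t ^ 2 := by positivity
    rw [abs_zero]
    nlinarith [mul_le_mul_of_nonneg_left (le_abs_self t) hσ,
      mul_le_mul_of_nonneg_right h (abs_nonneg t)]
  · rw [max_eq_left (by linarith)] at ht ⊢
    have : 0 < (t - (σ - w)) ^ 2 := by positivity
    rw [abs_of_pos (by linarith : 0 < σ - w)]
    nlinarith [le_abs_self t]

section Objective

variable {m d : ℕ}

noncomputable def proxObjective (ξ : ℝ) (A B : Matrix (Fin m) (Fin d) ℝ) : ℝ :=
  ξ * nuclearNorm B + (1 / 2) * ∑ i, ∑ j, (A i j - B i j) ^ 2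

lemma proxObjective_mul_mul_transpose {m' d' : ℕ} {U : Matrix (Fin m') (Fin m) ℝ}
    {V : Matrix (Fin d') (Fin d) ℝ} (hU : Uᵀ * U = 1) (hV : Vᵀ * V = 1)
    (ξ : ℝ) (A B : Matrix (Fin m) (Fin d) ℝ) :
    proxObjective ξ (U * A * Vᵀ) (U * B * Vᵀ) = proxObjective ξ A B := by
  have hsub : U * A * Vᵀ - U * B * Vᵀ = U * (A - B) * Vᵀ := by
    rw [Matrix.mul_sub, Matrix.sub_mul]
  simp only [proxObjective, nuclearNorm_mul_mul_transpose hU hV]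
  simpa only [← Matrix.sub_apply, hsub] using
    congrArg (ξ * nuclearNorm B + 1 / 2 * ·) (Matrix.sum_sq_mul_mul_transpose hU hV (A - B))

lemma proxObjective_lt_of_ne {ξ : ℝ} (hξ : 0 ≤ ξ) {S Sξ C : Matrix (Fin m) (Fin d) ℝ}
    (hS_off : ∀ (i : Fin m) (j : Fin d), (i : ℕ) ≠ j → S i j = 0)
    (hS_diag : ∀ (i : Fin m) (j : Fin d), (i : ℕ) = j → 0 ≤ S i j)
    (hSξ : ∀ (i : Fin m) (j : Fin d), Sξ i j = if (i : ℕ) = j then max (S i j - ξ) 0 else 0)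
    (hC : C ≠ Sξ) :
    proxObjective ξ S Sξ < proxObjective ξ S C := by
  set w : Fin m × Fin d → ℝ := fun p => if (p.1 : ℕ) = p.2 then ξ else 0
  have hsplit : ∀ X : Matrix (Fin m) (Fin d) ℝ,
      ξ * diagAbsSum X + 1 / 2 * ∑ i, ∑ j, (S i j - X i j) ^ 2 =
        ∑ p : Fin m × Fin d, (w p * |X p.1 p.2| + (S p.1 p.2 - X p.1 p.2) ^ 2 / 2) := by
    intro X
    simp only [diagAbsSum, Finset.sum_filter, Finset.mul_sum, Fintype.sum_prod_type,
      ← Finset.sum_add_distrib, w]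
    refine Finset.sum_congr rfl fun i _ => Finset.sum_congr rfl fun j _ => ?_
    split_ifs <;> ring
  have hentry : ∀ p : Fin m × Fin d,
      0 ≤ w p ∧ 0 ≤ S p.1 p.2 ∧ Sξ p.1 p.2 = max (S p.1 p.2 - w p) 0 := by
    rintro ⟨i, j⟩
    by_cases h : (i : ℕ) = j
    · simp [w, h, hξ, hS_diag i j h, hSξ]
    · simp [w, h, hS_off i j h, hSξ]
  have hmin : ∀ p c, c ≠ Sξ p.1 p.2 →
      w p * |Sξ p.1 p.2| + (S p.1 p.2 - Sξ p.1 p.2) ^ 2 / 2 <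
        w p * |c| + (S p.1 p.2 - c) ^ 2 / 2 := by
    intro p c hc
    obtain ⟨hw, hσ, heq⟩ := hentry p
    rw [heq] at hc ⊢
    exact soft_threshold_objective_lt hw hσ hc
  obtain ⟨p, hp⟩ : ∃ p : Fin m × Fin d, C p.1 p.2 ≠ Sξ p.1 p.2 := by
    by_contra! h
    exact hC (Matrix.ext fun i j => h (i, j))
  calc proxObjective ξ S Sξ = ξ * diagAbsSum Sξ + 1 / 2 * ∑ i, ∑ j, (S i j - Sξ i j) ^ 2 := by
        rw [proxObjective, nuclearNorm_eq_diagAbsSum fun i j h => by rw [hSξ, if_neg h]]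
    _ = ∑ q : Fin m × Fin d, (w q * |Sξ q.1 q.2| + (S q.1 q.2 - Sξ q.1 q.2) ^ 2 / 2) := hsplit Sξ
    _ < ∑ q : Fin m × Fin d, (w q * |C q.1 q.2| + (S q.1 q.2 - C q.1 q.2) ^ 2 / 2) := by
        refine Finset.sum_lt_sum (fun q _ => ?_) ⟨p, Finset.mem_univ p, hmin p _ hp⟩
        rcases eq_or_ne (C q.1 q.2) (Sξ q.1 q.2) with h | h
        · rw [h]
        · exact (hmin q _ h).le
    _ = ξ * diagAbsSum C + 1 / 2 * ∑ i, ∑ j, (S i j - C i j) ^ 2 := (hsplit C).symm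
    _ ≤ proxObjective ξ S C := by
        rw [proxObjective]
        gcongr
        exact diagAbsSum_le_nuclearNorm C

end Objective

/-- **Proximal operator of the nuclear norm (singular value thresholding).** Let
`A = U S Vᵀ` be a singular value decomposition (`U, V` orthogonal, `S` with vanishing
off-diagonal entries and nonnegative diagonal entries), let `ξ > 0`, and let `S_ξ` be `S`
with each diagonal entry `σ` replaced by `max{σ − ξ, 0}`. Then `B̂ := U S_ξ Vᵀ` is the
unique minimizer of `B ↦ ξ‖B‖_* + (1/2)‖A − B‖²_F`. -/
theorem stmt12 (m d : ℕ) (A : Matrix (Fin m) (Fin d) ℝ)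
    (U : Matrix (Fin m) (Fin m) ℝ) (V : Matrix (Fin d) (Fin d) ℝ)
    (S : Matrix (Fin m) (Fin d) ℝ)
    (hU : Uᵀ * U = 1) (hV : Vᵀ * V = 1)
    (hS_off : ∀ (i : Fin m) (j : Fin d), (i : ℕ) ≠ (j : ℕ) → S i j = 0)
    (hS_diag : ∀ (i : Fin m) (j : Fin d), (i : ℕ) = (j : ℕ) → 0 ≤ S i j)
    (hA : A = U * S * Vᵀ)
    (ξ : ℝ) (hξ : 0 < ξ)
    (Sξ : Matrix (Fin m) (Fin d) ℝ)
    (hSξ : ∀ (i : Fin m) (j : Fin d),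
      Sξ i j = if (i : ℕ) = (j : ℕ) then max (S i j - ξ) 0 else 0)
    (Bhat : Matrix (Fin m) (Fin d) ℝ) (hBhat : Bhat = U * Sξ * Vᵀ) :
    (∀ B : Matrix (Fin m) (Fin d) ℝ,
        ξ * nuclearNorm Bhat + (1 / 2) * ∑ i, ∑ j, (A i j - Bhat i j) ^ 2 ≤
          ξ * nuclearNorm B + (1 / 2) * ∑ i, ∑ j, (A i j - B i j) ^ 2) ∧
      ∀ B : Matrix (Fin m) (Fin d) ℝ, B ≠ Bhat →
        ξ * nuclearNorm Bhat + (1 / 2) * ∑ i, ∑ j, (A i j - Bhat i j) ^ 2 <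
          ξ * nuclearNorm B + (1 / 2) * ∑ i, ∑ j, (A i j - B i j) ^ 2 := by
  have hlt : ∀ B, B ≠ Bhat → proxObjective ξ A Bhat < proxObjective ξ A B := by
    intro B hB
    have hBC : B = U * (Uᵀ * B * V) * Vᵀ := by
      simp only [← Matrix.mul_assoc, mul_eq_one_comm.mp hU, Matrix.one_mul]
      rw [Matrix.mul_assoc, mul_eq_one_comm.mp hV, Matrix.mul_one]
    rw [hA, hBhat, hBC, proxObjective_mul_mul_transpose hU hV,
      proxObjective_mul_mul_transpose hU hV]
    refine proxObjective_lt_of_ne hξ.le hS_off hS_diag hSξ fun hC => hB ?_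
    rw [hBC, hC, hBhat]
  refine ⟨fun B => ?_, hlt⟩
  rcases eq_or_ne B Bhat with rfl | hB
  · exact le_rfl
  · exact (hlt B hB).le
end
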